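/- Over C, the maximal rank of a tensor in C^2 ⊗ C^2 ⊗ C^2 is 3: every tensor in C^2 ⊗ C^2 ⊗ C^2 has rank at most 3. -/

import Mathlib

open TensorProduct BigOperators

noncomputable section

/-- Rank of an order-3 tensor. -/
def tRank (k : Type*) [Field k] {A B C : Type*} [AddCommGroup A] [Module k A]
    [AddCommGroup B] [Module k B] [AddCommGroup C] [Module k C]
    (T : A ⊗[k] (B ⊗[k] C)) : ℕ :=
  sInf {r | ∃ (a : Fin r → A) (b : Fin r → B) (c : Fin r → C),
    T = ∑ i, a i ⊗ₜ[k] (b i ⊗ₜ[k] c i)}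

/-- Flattening of `A ⊗ M` to a linear map `A* → M`. -/
def flatten (k : Type*) [Field k] {A M : Type*} [AddCommGroup A] [Module k A]
    [AddCommGroup M] [Module k M] : A ⊗[k] M →ₗ[k] Module.Dual k A →ₗ[k] M :=
  (dualTensorHom k (Module.Dual k A) M).comp
    (TensorProduct.map (Module.Dual.eval k A) LinearMap.id)

variable (k : Type*) [Field k] {A B C : Type*} [AddCommGroup A] [Module k A]
    [AddCommGroup B] [Module k B] [AddCommGroup C] [Module k C]

def rankA (T : A ⊗[k] (B ⊗[k] C)) : ℕ :=
  Module.finrank k (LinearMap.range (flatten k T))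

def rankB (T : A ⊗[k] (B ⊗[k] C)) : ℕ :=
  Module.finrank k (LinearMap.range (flatten k ((TensorProduct.leftComm k A B C) T)))

def rankC (T : A ⊗[k] (B ⊗[k] C)) : ℕ :=
  Module.finrank k (LinearMap.range (flatten k ((TensorProduct.leftComm k A C B)
    ((TensorProduct.congr (LinearEquiv.refl k A) (TensorProduct.comm k B C)) T))))

/-!
Slicing along the first factor writes `T = e₀ ⊗ S₀ + e₁ ⊗ S₁` with `S₀, S₁` 2 × 2 matrices.
If `S₁` is singular it is a rank-one tensor `u ⊗ w`. Otherwise, over an algebraically closed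
field, `S₀ - c S₁` is singular for an eigenvalue `c` of `S₁⁻¹ S₀`, and
`T = e₀ ⊗ (S₀ - c S₁) + (c e₀ + e₁) ⊗ S₁`. Either way `T = a ⊗ u ⊗ w + a' ⊗ S` for some matrix
`S`, which is a sum of two pure tensors, so three terms suffice.
-/

theorem tRank_le_of_eq_sum {T : A ⊗[k] (B ⊗[k] C)} {r : ℕ}
    (a : Fin r → A) (b : Fin r → B) (c : Fin r → C) (h : T = ∑ i, a i ⊗ₜ[k] (b i ⊗ₜ[k] c i)) :
    tRank k T ≤ r :=
  Nat.sInf_le ⟨a, b, c, h⟩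

theorem TensorProduct.exists_eq_sum_basis_tmul {R M N ι : Type*} [CommSemiring R]
    [AddCommMonoid M] [Module R M] [AddCommMonoid N] [Module R N] [Fintype ι]
    (ℬ : Module.Basis ι R M) (x : M ⊗[R] N) : ∃ f : ι → N, x = ∑ i, ℬ i ⊗ₜ f i := by
  obtain ⟨c, rfl⟩ := TensorProduct.eq_repr_basis_left ℬ x
  exact ⟨c, Finsupp.sum_fintype _ _ (by simp)⟩

namespace Matrix

variable {K : Type*} [Field K]

theorem exists_eq_vecMulVec_of_det_eq_zero {M : Matrix (Fin 2) (Fin 2) K} (h : M.det = 0) :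
    ∃ u w, M = vecMulVec u w := by
  have hdep : ¬LinearIndependent K M.row := by
    rwa [linearIndependent_rows_iff_isUnit, isUnit_iff_isUnit_det, isUnit_iff_ne_zero, not_not]
  have hspan : Module.finrank K (Submodule.span K (Set.range M.row)) ≤ 1 := by
    rw [linearIndependent_iff_card_eq_finrank_span, Fintype.card_fin] at hdep
    have := finrank_range_le_card (R := K) M.row
    rw [Fintype.card_fin] at this
    exact Nat.lt_succ_iff.mp (this.lt_of_ne fun h => hdep h.symm)
  obtain ⟨w, hw⟩ := finrank_le_one_iff.mp hspan
  choose u hu using fun i => hw ⟨M.row i, Submodule.subset_span (Set.mem_range_self i)⟩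
  refine ⟨u, w, ext fun i j => ?_⟩
  simpa [vecMulVec_apply] using congr_fun (congr_arg Subtype.val (hu i)).symm j

theorem exists_det_sub_smul_eq_zero [IsAlgClosed K] {n : Type*} [Fintype n] [DecidableEq n]
    [Nonempty n] (M N : Matrix n n K) (hN : N.det ≠ 0) : ∃ c : K, (M - c • N).det = 0 := by
  obtain ⟨c, hc⟩ := IsAlgClosed.exists_root (N⁻¹ * M).charpoly
    (by rw [charpoly_degree_eq_dim]; exact_mod_cast Fintype.card_ne_zero)
  refine ⟨c, ?_⟩
  have hfactor : M - c • N = -(N * (scalar n c - N⁻¹ * M)) := by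
    rw [mul_sub, mul_nonsing_inv_cancel_left _ _ (isUnit_iff_ne_zero.mpr hN), scalar_apply,
      ← smul_one_eq_diagonal, Matrix.mul_smul, mul_one, neg_sub]
  rw [hfactor, det_neg, det_mul, ← eval_charpoly, hc.eq_zero, mul_zero, mul_zero]

end Matrix

section TensorMatrix

variable (K : Type*) [Field K] (m n : Type*) [Fintype m] [DecidableEq m]

def tensorToMatrix : (m → K) ⊗[K] (n → K) ≃ₗ[K] Matrix m n K :=
  TensorProduct.comm K _ _ ≪≫ₗ TensorProduct.piScalarRight K K (n → K) m ≪≫ₗ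
    Matrix.ofLinearEquiv K

variable {K m n}

@[simp]
theorem tensorToMatrix_tmul (u : m → K) (w : n → K) :
    tensorToMatrix K m n (u ⊗ₜ w) = Matrix.vecMulVec u w := by
  ext i j
  simp [tensorToMatrix, Matrix.vecMulVec_apply]

theorem exists_eq_tmul_of_det_tensorToMatrix_eq_zero {s : (Fin 2 → K) ⊗[K] (Fin 2 → K)}
    (h : (tensorToMatrix K _ _ s).det = 0) : ∃ u w, s = u ⊗ₜ w := by
  obtain ⟨u, w, huw⟩ := Matrix.exists_eq_vecMulVec_of_det_eq_zero h
  exact ⟨u, w, (tensorToMatrix K _ _).injective (by rw [huw, tensorToMatrix_tmul])⟩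

theorem exists_eq_tmul_tmul_add_tmul [IsAlgClosed K] {A : Type*} [AddCommGroup A] [Module K A]
    (x₀ x₁ : A) (s₀ s₁ : (Fin 2 → K) ⊗[K] (Fin 2 → K)) :
    ∃ (a a' : A) (u w : Fin 2 → K) (s : (Fin 2 → K) ⊗[K] (Fin 2 → K)),
      x₀ ⊗ₜ s₀ + x₁ ⊗ₜ s₁ = a ⊗ₜ[K] (u ⊗ₜ[K] w) + a' ⊗ₜ s := by
  set Φ := tensorToMatrix K (Fin 2) (Fin 2)
  by_cases hs₁ : (Φ s₁).det = 0
  · obtain ⟨u, w, rfl⟩ := exists_eq_tmul_of_det_tensorToMatrix_eq_zero hs₁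
    exact ⟨x₁, x₀, u, w, s₀, add_comm _ _⟩
  · obtain ⟨c, hc⟩ := Matrix.exists_det_sub_smul_eq_zero (Φ s₀) (Φ s₁) hs₁
    rw [← map_smul, ← map_sub] at hc
    obtain ⟨u, w, huw⟩ := exists_eq_tmul_of_det_tensorToMatrix_eq_zero hc
    refine ⟨x₀, c • x₀ + x₁, u, w, s₁, ?_⟩
    rw [← huw, tmul_sub, add_tmul, smul_tmul, tmul_smul]
    abel

end TensorMatrix

/-- Every tensor in `ℂ² ⊗ ℂ² ⊗ ℂ²` has rank at most 3. -/
theorem maximal_rank_C2C2C2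
    (T : (Fin 2 → ℂ) ⊗[ℂ] ((Fin 2 → ℂ) ⊗[ℂ] (Fin 2 → ℂ))) :
    tRank ℂ T ≤ 3 := by
  let e := Pi.basisFun ℂ (Fin 2)
  obtain ⟨t, rfl⟩ := TensorProduct.exists_eq_sum_basis_tmul e T
  obtain ⟨a, a', u, w, s, hT⟩ := exists_eq_tmul_tmul_add_tmul (e 0) (e 1) (t 0) (t 1)
  obtain ⟨r, rfl⟩ := TensorProduct.exists_eq_sum_basis_tmul e s
  refine tRank_le_of_eq_sum ℂ ![a, a', a'] ![u, e 0, e 1] ![w, r 0, r 1] ?_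
  rw [Fin.sum_univ_two, hT, Fin.sum_univ_two, tmul_add, Fin.sum_univ_three, add_assoc]
  rfl
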